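/- arXiv:1104.0472 — 2 statements merged into one kernel-verified Lean document; each statement's English description precedes it below -/
import Mathlib

section
/- Let F be a field with more than k elements whose characteristic does not divide k, such that every element of F is a sum of w k-th powers. Every polynomial P ∈ F[x₁,…,xₙ] of degree d can be written as P = Q₁^k + ⋯ + Q_s^k for some s ≤ k·w, with Qᵢ ∈ F[x₁,…,xₙ] and deg Qᵢ^k ≤ kd. -/
/-!
Pick distinct `a₁, …, a_k ∈ F` and solve the Vandermonde system `∑ lᵢ aᵢ ^ m = δ_{m,k-1} / k`
for `m < k`. Expanding binomially, `∑ lᵢ (X + aᵢ) ^ k` then has no coefficient in degrees `2..k`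
and coefficient `1` in degree `1`, so it equals `X + c`. Substituting `X = P - c` gives
`P = ∑ lᵢ (P + aᵢ - c) ^ k`, and writing each `lᵢ` as a sum of `w` `k`-th powers `bᵢⱼ ^ k`
turns this into `P = ∑ (bᵢⱼ (P + aᵢ - c)) ^ k`, a sum of `k * w` `k`-th powers of polynomials
of degree at most `deg P`.
-/

open Polynomial

theorem exists_sum_mul_pow_eq_of_injective {F : Type*} [Field F] {k : ℕ} {a : Fin k → F}
    (ha : Function.Injective a) (c : Fin k → F) :
    ∃ l : Fin k → F, ∀ m : Fin k, ∑ i, l i * a i ^ (m : ℕ) = c m := by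
  have hunit : IsUnit (Matrix.vandermonde a).transpose := by
    rw [Matrix.isUnit_iff_isUnit_det, Matrix.det_transpose]
    exact (Matrix.det_vandermonde_ne_zero_iff.mpr ha).isUnit
  obtain ⟨l, hl⟩ := Matrix.mulVec_surjective_iff_isUnit.mpr hunit c
  refine ⟨l, fun m => ?_⟩
  rw [← hl]
  simp [Matrix.mulVec, dotProduct, Matrix.vandermonde, mul_comm]

theorem Polynomial.exists_sum_C_mul_X_add_C_pow_eq_X_add_C {F : Type*} [Field F] {k : ℕ}
    {a : Fin k → F} (ha : Function.Injective a) (hk : (k : F) ≠ 0) :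
    ∃ (l : Fin k → F) (c : F), ∑ i, C (l i) * (X + C (a i)) ^ k = X + C c := by
  have hk0 : 0 < k := Nat.pos_of_ne_zero (by rintro rfl; simp at hk)
  obtain ⟨l, hl⟩ := exists_sum_mul_pow_eq_of_injective ha
    (fun m => if (m : ℕ) = k - 1 then (k : F)⁻¹ else 0)
  refine ⟨l, (∑ i, C (l i) * (X + C (a i)) ^ k).coeff 0, ?_⟩
  set q : F[X] := ∑ i, C (l i) * (X + C (a i)) ^ k
  have hcoeff (j : ℕ) : q.coeff j = (∑ i, l i * a i ^ (k - j)) * (k.choose j : F) := by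
    simp only [q, finsetSum_coeff, Finset.sum_mul, coeff_C_mul, coeff_X_add_C_pow, mul_assoc]
  clear_value q
  ext (_ | _ | j) <;> rw [coeff_add, coeff_C]
  · simp
  · have := hl ⟨k - 1, by omega⟩
    simp only [if_true] at this
    simp [hcoeff, this, hk]
  · rw [hcoeff]
    rcases le_or_gt (j + 2) k with hjk | hjk
    · have := hl ⟨k - (j + 2), by omega⟩
      rw [if_neg (by simp; omega)] at this
      simp [this, coeff_X]
    · simp [Nat.choose_eq_zero_of_lt hjk, coeff_X]

theorem exists_forall_eq_sum_pow_algebraMap_mul_add {F : Type*} [Field F] (A : Type*) [CommRing A]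
    [Algebra F A] {k w : ℕ} (hcard : (k : Cardinal) ≤ Cardinal.mk F) (hk : (k : F) ≠ 0)
    (hW : ∀ a : F, ∃ b : Fin w → F, a = ∑ i, b i ^ k) :
    ∃ b e : Fin k × Fin w → F,
      ∀ x : A, x = ∑ p, (algebraMap F A (b p) * (x + algebraMap F A (e p))) ^ k := by
  obtain ⟨a⟩ : Nonempty (Fin k ↪ F) := by
    rw [← Cardinal.lift_mk_le']
    simpa using hcard
  obtain ⟨l, c, hid⟩ := exists_sum_C_mul_X_add_C_pow_eq_X_add_C a.injective hk
  choose b hb using fun i => hW (l i)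
  refine ⟨fun p => b p.1 p.2, fun p => a p.1 - c, fun x => ?_⟩
  have := congrArg (aeval (x - algebraMap F A c)) hid
  simp only [map_sum, map_mul, map_add, map_pow, aeval_X, aeval_C, sub_add_cancel] at this
  calc x = ∑ i, algebraMap F A (l i) * (x + algebraMap F A (a i - c)) ^ k := by
        conv_lhs => rw [← this]
        exact Finset.sum_congr rfl fun i _ => by rw [map_sub]; ring
    _ = ∑ i, ∑ j, (algebraMap F A (b i j) * (x + algebraMap F A (a i - c))) ^ k := by
        refine Finset.sum_congr rfl fun i _ => ?_
        simp only [hb i, map_sum, map_pow, Finset.sum_mul, mul_pow]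
    _ = _ := by rw [Fintype.sum_prod_type]

theorem MvPolynomial.totalDegree_C_mul_add_C_pow_le {σ R : Type*} [CommSemiring R]
    (P : MvPolynomial σ R) (b e : R) (k : ℕ) :
    ((C b * (P + C e)) ^ k).totalDegree ≤ k * P.totalDegree := by
  refine (totalDegree_pow _ k).trans (Nat.mul_le_mul_left k ?_)
  calc (C b * (P + C e)).totalDegree ≤ (C b).totalDegree + (P + C e).totalDegree :=
        totalDegree_mul _ _
    _ ≤ 0 + max P.totalDegree (C e).totalDegree := by
        gcongr
        · exact (totalDegree_C b).le
        · exact totalDegree_add _ _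
    _ = P.totalDegree := by simp

theorem decomposition_kw_terms_general (F : Type*) [Field F] (k w : ℕ)
    (hcard : (k : Cardinal) < Cardinal.mk F) (hchar : (k : F) ≠ 0)
    (hW : ∀ a : F, ∃ b : Fin w → F, a = ∑ i, b i ^ k)
    (n d : ℕ) (P : MvPolynomial (Fin n) F) (hP : P.totalDegree = d) :
    ∃ (s : ℕ) (Q : Fin s → MvPolynomial (Fin n) F),
      s ≤ k * w ∧ P = ∑ i, Q i ^ k ∧ ∀ i, (Q i ^ k).totalDegree ≤ k * d := by
  obtain ⟨b, e, hsum⟩ :=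
    exists_forall_eq_sum_pow_algebraMap_mul_add (MvPolynomial (Fin n) F) hcard.le hchar hW
  let Q (p : Fin k × Fin w) : MvPolynomial (Fin n) F :=
    MvPolynomial.C (b p) * (P + MvPolynomial.C (e p))
  refine ⟨k * w, Q ∘ finProdFinEquiv.symm, le_rfl, ?_, fun m => ?_⟩
  · rw [Function.comp_def, finProdFinEquiv.symm.sum_comp (fun p => Q p ^ k)]
    exact hsum P
  · exact hP ▸ MvPolynomial.totalDegree_C_mul_add_C_pow_le P _ _ k

/-- If every element of `F` is a sum of `w` `k`-th powers, then every polynomial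
of degree `d` is a sum of at most `k·w` `k`-th powers of degree `≤ kd`. -/
theorem decomposition_kw_terms (F : Type*) [Field F] (k w : ℕ) (hk : 2 ≤ k)
    (hw : 1 ≤ w) (hcard : (k : Cardinal) < Cardinal.mk F) (hchar : (k : F) ≠ 0)
    (hW : ∀ a : F, ∃ b : Fin w → F, a = ∑ i, b i ^ k)
    (n d : ℕ) (hn : 1 ≤ n) (P : MvPolynomial (Fin n) F) (hP : P.totalDegree = d) :
    ∃ (s : ℕ) (Q : Fin s → MvPolynomial (Fin n) F),
      s ≤ k * w ∧ P = ∑ i, Q i ^ k ∧ ∀ i, (Q i ^ k).totalDegree ≤ k * d :=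
  decomposition_kw_terms_general F k w hcard hchar hW n d P hP
end

section
/- Let F be a field with more than k elements whose characteristic does not divide k, and in which each element is a sum of w k-th powers. Every P ∈ F[x,y] admits a decomposition P = Q₁^k + ⋯ + Q_s^k with deg Qᵢ^k ≤ 2·deg P + 4k² and s ≤ k²(2k-1)·w. In particular, the bound on the number of terms is independent of deg P. -/
/-!
Fix `k + 1` distinct scalars `aₜ`. Inverting their Vandermonde matrix gives weights `λₜ` with
`∑ₜ λₜ aₜ ^ m = [m = 1]` for `m ≤ k`, hence `∑ₜ λₜ (u + aₜ v) ^ k = k u ^ (k - 1) v`; writing each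
`k⁻¹ λₜ` as a sum of `w` `k`-th powers expresses `u ^ (k - 1) v` as a sum of `(k + 1) w`
`k`-th powers of linear combinations of `u` and `v`.

Cut the exponents of `P` into boxes of side `δ = (k - 1) q`, with `q` least such that `deg P < k δ`:
`P = ∑_c X ^ (δ c) V_c` over at most `k ^ 2` boxes `c`, each `V_c` of degree `< 2 δ`. Since
`X ^ (δ c) = (X ^ (q c)) ^ (k - 1)`, the identity with `u = X ^ (q c)` and `v = V_c` decomposes each
box into `k`-th powers of polynomials of degree `≤ 2 δ`, and `2 k δ ≤ 2 deg P + 2 k ^ 2`.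
-/

open Finset

theorem exists_sum_mul_pow_eq {F : Type*} [Field F] {n : ℕ} {a : Fin n → F}
    (ha : Function.Injective a) (c : Fin n → F) :
    ∃ lam : Fin n → F, ∀ m : Fin n, ∑ t, lam t * a t ^ (m : ℕ) = c m := by
  have hunit : IsUnit (Matrix.vandermonde a) := (Matrix.isUnit_iff_isUnit_det _).2 <|
    isUnit_iff_ne_zero.2 (Matrix.det_vandermonde_ne_zero_iff.2 ha)
  obtain ⟨lam, hlam⟩ := Matrix.vecMul_surjective_iff_isUnit.2 hunit c
  exact ⟨lam, congrFun hlam⟩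

theorem sum_smul_add_smul_pow_eq {F R ι : Type*} [CommSemiring F] [CommSemiring R] [Algebra F R]
    (s : Finset ι) (lam a : ι → F) {k : ℕ}
    (hmom : ∀ m ≤ k, ∑ t ∈ s, lam t * a t ^ m = if m = 1 then 1 else 0) (u v : R) :
    ∑ t ∈ s, lam t • (u + a t • v) ^ k = (k : F) • (u ^ (k - 1) * v) := by
  have expand : ∀ t, lam t • (u + a t • v) ^ k
      = ∑ m ∈ range (k + 1), (lam t * a t ^ m) • (v ^ m * u ^ (k - m) * (k.choose m : R)) := by
    intro t
    rw [add_comm, add_pow, smul_sum]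
    refine sum_congr rfl fun m _ => ?_
    rw [smul_pow, mul_smul, smul_mul_assoc, smul_mul_assoc]
  simp_rw [expand]
  rw [sum_comm]
  simp_rw [← sum_smul]
  rw [sum_congr rfl fun m hm => by rw [hmom m (Nat.lt_succ_iff.1 (mem_range.1 hm))]]
  simp only [ite_smul, one_smul, zero_smul, sum_ite_eq', mem_range]
  rcases k with _ | k
  · simp
  · rw [if_pos (by omega), pow_one, Nat.choose_one_right, Nat.add_sub_cancel,
      Nat.cast_smul_eq_nsmul, nsmul_eq_mul]
    ring

theorem nonempty_fin_succ_embedding_of_lt {α : Type*} {k : ℕ} (h : (k : Cardinal) < Cardinal.mk α) :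
    Nonempty (Fin (k + 1) ↪ α) := by
  rw [← Cardinal.lift_mk_le', Cardinal.lift_mk_fin, Cardinal.lift_uzero, Nat.cast_succ]
  exact Cardinal.add_one_le_of_lt h

theorem exists_forall_pow_sub_one_mul_eq_sum_smul_pow (F R : Type*) [Field F] [CommSemiring R]
    [Algebra F R] {k w : ℕ} (hcard : (k : Cardinal) < Cardinal.mk F) (hchar : (k : F) ≠ 0)
    (hW : ∀ a : F, ∃ b : Fin w → F, a = ∑ i, b i ^ k) :
    ∃ (a : Fin (k + 1) → F) (b : Fin (k + 1) → Fin w → F),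
      ∀ u v : R, u ^ (k - 1) * v = ∑ t, ∑ l, (b t l • (u + a t • v)) ^ k := by
  obtain ⟨a⟩ := nonempty_fin_succ_embedding_of_lt hcard
  obtain ⟨lam, hlam⟩ := exists_sum_mul_pow_eq a.injective fun m => if (m : ℕ) = 1 then 1 else 0
  choose b hb using fun t => hW ((k : F)⁻¹ * lam t)
  refine ⟨a, b, fun u v => ?_⟩
  have hmom (m : ℕ) (hm : m ≤ k) : ∑ t, lam t * a t ^ m = if m = 1 then 1 else 0 :=
    hlam ⟨m, Nat.lt_succ_of_le hm⟩
  calc u ^ (k - 1) * v = (k : F)⁻¹ • ∑ t, lam t • (u + a t • v) ^ k := by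
        rw [sum_smul_add_smul_pow_eq _ _ _ hmom, smul_smul, inv_mul_cancel₀ hchar, one_smul]
    _ = ∑ t, ∑ l, (b t l • (u + a t • v)) ^ k := by
        simp_rw [smul_pow, ← sum_smul, ← hb, smul_sum, smul_smul]

namespace MvPolynomial

variable {σ R : Type*} [CommSemiring R]

theorem totalDegree_monomial_le_card_mul [Fintype σ] {s : σ →₀ ℕ} {D : ℕ} (hs : ∀ i, s i ≤ D)
    (r : R) : (monomial s r).totalDegree ≤ Fintype.card σ * D := by
  calc _ ≤ ∑ i, s i := (totalDegree_monomial_le s r).trans_eq (Finsupp.sum_fintype _ _ fun _ => rfl)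
    _ ≤ ∑ _ : σ, D := sum_le_sum fun i _ => hs i
    _ = Fintype.card σ * D := by simp

theorem floorDiv_apply_lt_of_mem_support {P : MvPolynomial σ R} {e : σ →₀ ℕ} (he : e ∈ P.support)
    {k δ : ℕ} (hP : P.totalDegree < k * δ) (i : σ) : (e ⌊/⌋ δ) i < k := by
  have hδ : 0 < δ := Nat.pos_of_mul_pos_left (P.totalDegree.zero_le.trans_lt hP)
  rw [Finsupp.floorDiv_apply, Nat.floorDiv_eq_div, Nat.div_lt_iff_lt_mul hδ]
  exact ((Finsupp.le_degree i e).trans (le_totalDegree he)).trans_lt hP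

variable [DecidableEq σ]

noncomputable def blockPart (δ : ℕ) (P : MvPolynomial σ R) (c : σ →₀ ℕ) : MvPolynomial σ R :=
  ∑ e ∈ P.support with e ⌊/⌋ δ = c, monomial (e - δ • c) (P.coeff e)

theorem sum_monomial_mul_blockPart {δ : ℕ} (hδ : 0 < δ) (P : MvPolynomial σ R) :
    ∑ c ∈ P.support.image (· ⌊/⌋ δ), monomial (δ • c) 1 * blockPart δ P c = P := by
  calc _ = ∑ c ∈ P.support.image (· ⌊/⌋ δ), ∑ e ∈ P.support with e ⌊/⌋ δ = c,
        monomial e (P.coeff e) := by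
        refine sum_congr rfl fun c _ => ?_
        rw [blockPart, mul_sum]
        refine sum_congr rfl fun e he => ?_
        rw [← (mem_filter.1 he).2, monomial_mul, one_mul,
          add_tsub_cancel_of_le (smul_floorDiv_le hδ)]
    _ = P := by
        rw [sum_fiberwise_of_maps_to fun e he => mem_image_of_mem _ he,
          support_sum_monomial_coeff]

theorem totalDegree_blockPart_le [Fintype σ] {δ : ℕ} (hδ : 0 < δ) (P : MvPolynomial σ R)
    (c : σ →₀ ℕ) : (blockPart δ P c).totalDegree ≤ Fintype.card σ * δ := by
  refine (totalDegree_finsetSum _ _).trans (Finset.sup_le fun e he => ?_)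
  obtain ⟨-, rfl⟩ := mem_filter.1 he
  refine totalDegree_monomial_le_card_mul (fun i => ?_) _
  rw [Finsupp.tsub_apply, Finsupp.smul_apply, Finsupp.floorDiv_apply,
    Nat.floorDiv_eq_div, smul_eq_mul, ← Nat.mod_eq_sub_mul_div]
  exact (Nat.mod_lt _ hδ).le

theorem card_image_floorDiv_support_le [Fintype σ] {P : MvPolynomial σ R} {k δ : ℕ}
    (hP : P.totalDegree < k * δ) :
    #(P.support.image (· ⌊/⌋ δ)) ≤ k ^ Fintype.card σ := by
  calc _ ≤ #(Fintype.piFinset fun _ : σ => range k) := by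
        refine card_le_card_of_injOn (fun c => ⇑c) (fun c hc => ?_) DFunLike.coe_injective.injOn
        obtain ⟨e, he, rfl⟩ := mem_image.1 hc
        exact Fintype.mem_piFinset.2 fun i => mem_range.2 (floorDiv_apply_lt_of_mem_support he hP i)
    _ = k ^ Fintype.card σ := by simp

theorem exists_eq_sum_pow_totalDegree_le (F : Type*) [Field F] [Fintype σ] {k w : ℕ}
    (hk : 2 ≤ k) (hcard : (k : Cardinal) < Cardinal.mk F)
    (hchar : (k : F) ≠ 0) (hW : ∀ a : F, ∃ b : Fin w → F, a = ∑ i, b i ^ k)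
    (P : MvPolynomial σ F) :
    ∃ (s : ℕ) (Q : Fin s → MvPolynomial σ F),
      s ≤ k ^ Fintype.card σ * (k + 1) * w ∧
      P = ∑ i, Q i ^ k ∧
      ∀ i, (Q i ^ k).totalDegree ≤ Fintype.card σ * (P.totalDegree + k * (k - 1)) := by
  obtain ⟨a, b, hab⟩ :=
    exists_forall_pow_sub_one_mul_eq_sum_smul_pow F (MvPolynomial σ F) hcard hchar hW
  have hm : 0 < k * (k - 1) := Nat.mul_pos (by omega) (by omega)
  set q := P.totalDegree / (k * (k - 1)) + 1
  set δ := (k - 1) * q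
  have hlt : P.totalDegree < k * δ := by
    rw [← mul_assoc]; exact Nat.lt_mul_div_succ _ hm
  have hle : k * δ ≤ P.totalDegree + k * (k - 1) := by
    rw [← mul_assoc, mul_add, mul_one]
    exact Nat.add_le_add_right (Nat.mul_div_le _ _) _
  have hδ : 0 < δ := Nat.pos_of_mul_pos_left (P.totalDegree.zero_le.trans_lt hlt)
  set B := P.support.image (· ⌊/⌋ δ)
  let Q : B × Fin (k + 1) × Fin w → MvPolynomial σ F := fun x =>
    b x.2.1 x.2.2 • (monomial (q • x.1.1) 1 + a x.2.1 • blockPart δ P x.1)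
  have hsum : P = ∑ x, Q x ^ k :=
    calc P = ∑ c ∈ B, monomial (δ • c) 1 * blockPart δ P c := (sum_monomial_mul_blockPart hδ P).symm
      _ = ∑ c ∈ B, monomial (q • c) 1 ^ (k - 1) * blockPart δ P c := by
        simp_rw [monomial_pow, one_pow, smul_smul]
        rfl
      _ = ∑ x, Q x ^ k := by
        rw [← sum_coe_sort]
        simp_rw [hab, Fintype.sum_prod_type]
        rfl
  have hdeg (x) : (Q x).totalDegree ≤ Fintype.card σ * δ := by
    refine (totalDegree_smul_le _ _).trans ((totalDegree_add _ _).trans (max_le ?_ ?_))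
    · refine totalDegree_monomial_le_card_mul (fun i => ?_) _
      obtain ⟨e, he, hc⟩ := mem_image.1 x.1.2
      rw [Finsupp.smul_apply, smul_eq_mul, mul_comm]
      exact Nat.mul_le_mul_right _ <|
        Nat.le_sub_one_of_lt (hc ▸ floorDiv_apply_lt_of_mem_support he hlt i)
    · exact (totalDegree_smul_le _ _).trans (totalDegree_blockPart_le hδ P _)
  refine ⟨_, Q ∘ (Fintype.equivFin _).symm, ?_, hsum.trans (Equiv.sum_comp _ _).symm, fun i => ?_⟩
  · simp only [Fintype.card_prod, Fintype.card_coe, Fintype.card_fin, ← mul_assoc]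
    gcongr
    exact card_image_floorDiv_support_le hlt
  · calc _ ≤ k * (Q _).totalDegree := totalDegree_pow _ _
      _ ≤ k * (Fintype.card σ * δ) := Nat.mul_le_mul_left _ (hdeg _)
      _ ≤ _ := by rw [mul_left_comm]; exact Nat.mul_le_mul_left _ hle

end MvPolynomial

theorem decomposition_medium_degree_general (F : Type*) [Field F] (k w : ℕ) (hk : 2 ≤ k)
    (hcard : (k : Cardinal) < Cardinal.mk F) (hchar : (k : F) ≠ 0)
    (hW : ∀ a : F, ∃ b : Fin w → F, a = ∑ i, b i ^ k)
    (P : MvPolynomial (Fin 2) F) :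
    ∃ (s : ℕ) (Q : Fin s → MvPolynomial (Fin 2) F),
      s ≤ k ^ 2 * (2 * k - 1) * w ∧
      P = ∑ i, Q i ^ k ∧
      ∀ i, (Q i ^ k).totalDegree ≤ 2 * P.totalDegree + 4 * k ^ 2 := by
  obtain ⟨s, Q, hs, hP, hdeg⟩ := MvPolynomial.exists_eq_sum_pow_totalDegree_le F hk hcard hchar hW P
  rw [Fintype.card_fin] at hs hdeg
  refine ⟨s, Q, hs.trans ?_, hP, fun i => (hdeg i).trans ?_⟩
  · gcongr
    omega
  · have : k * (k - 1) ≤ k ^ 2 := pow_two k ▸ Nat.mul_le_mul_left k (Nat.sub_le k 1)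
    omega

/-- Every `P ∈ F[x,y]` is a sum of at most `k²(2k-1)·w` `k`-th powers of
degree `≤ 2·deg P + 4k²`: the number of terms does not depend on `deg P`. -/
theorem decomposition_medium_degree (F : Type*) [Field F] (k w : ℕ) (hk : 2 ≤ k)
    (hw : 1 ≤ w) (hcard : (k : Cardinal) < Cardinal.mk F) (hchar : (k : F) ≠ 0)
    (hW : ∀ a : F, ∃ b : Fin w → F, a = ∑ i, b i ^ k)
    (P : MvPolynomial (Fin 2) F) :
    ∃ (s : ℕ) (Q : Fin s → MvPolynomial (Fin 2) F),
      s ≤ k ^ 2 * (2 * k - 1) * w ∧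
      P = ∑ i, Q i ^ k ∧
      ∀ i, (Q i ^ k).totalDegree ≤ 2 * P.totalDegree + 4 * k ^ 2 :=
  decomposition_medium_degree_general F k w hk hcard hchar hW P
end
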